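/- For |q|<1, ((1+q)/(1−q))·∑_{n≥1} (1/q;q²)_n (−1)^n q^{2n}/(−q²;q²)_n − ∑_{n≥1} (1/q;q²)_{n+1} (−1)^n q^{2n+1}/(−q²;q²)_n = q. -/

import Mathlib

open scoped BigOperators

/-- The finite q-Pochhammer symbol `(a;q)_n = ∏_{j=0}^{n-1} (1 - a q^j)`. -/
noncomputable def qPoch (a q : ℂ) (n : ℕ) : ℂ := ∏ j ∈ Finset.range n, (1 - a * q ^ j)

open Filter Topology Asymptotics

/-!
Put `α_{n+1} = (1/q;q²)_{n+1} (-1)^{n+1} q^{2n+2} / ((1-q) (-q²;q²)_n)`. Both summands of the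
`n`-th term are `α_{n+1}` times explicit factors, and
`α_{n+2} / α_{n+1} = -q² (1-q^{2n+1}) / (1+q^{2n+2})`, so the `n`-th term of the combined series
equals `α_{n+1} - α_{n+2}`; this comes down to `1 + q - q (1 - q^{2n+1}) = 1 + q^{2n+2}`. As that
ratio tends to `-q²`, the `α`'s are summable and the series telescopes to `α_1 = q`.
-/

theorem summable_of_eq_mul_of_tendsto {R : Type*} [NormedRing R] [CompleteSpace R]
    {f r : ℕ → R} {l : R} (hf : ∀ n, f (n + 1) = f n * r n) (hl : ‖l‖ < 1)
    (hr : Tendsto r atTop (𝓝 l)) : Summable f := by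
  obtain ⟨c, hlc, hc⟩ := exists_between hl
  refine summable_of_ratio_norm_eventually_le hc ?_
  filter_upwards [hr.norm.eventually_le_const hlc] with n hn
  rw [hf n, mul_comm c]
  exact (norm_mul_le _ _).trans (mul_le_mul_of_nonneg_left hn (norm_nonneg _))

theorem Summable.mul_of_tendsto {f u : ℕ → ℂ} (hf : Summable f) {c : ℂ}
    (hu : Tendsto u atTop (𝓝 c)) : Summable fun n => f n * u n :=
  summable_of_isBigO_nat' hf (by simpa using (isBigO_refl f atTop).mul (hu.isBigO_one ℂ))

theorem Summable.tsum_sub_succ {G : Type*} [AddCommGroup G] [TopologicalSpace G]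
    [IsTopologicalAddGroup G] [T2Space G] {f : ℕ → G} (hf : Summable f) :
    ∑' n, (f n - f (n + 1)) = f 0 := by
  rw [hf.tsum_sub ((summable_nat_add_iff 1).2 hf), hf.tsum_eq_zero_add, add_sub_cancel_right]

theorem tendsto_pow_two_mul_add {q : ℂ} (hq : ‖q‖ < 1) (k : ℕ) :
    Tendsto (fun n : ℕ => q ^ (2 * n + k)) atTop (𝓝 0) :=
  (tendsto_pow_atTop_nhds_zero_of_norm_lt_one hq).comp
    (tendsto_atTop_mono (fun n => show n ≤ 2 * n + k by omega) tendsto_id)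

theorem qPoch_succ (a q : ℂ) (n : ℕ) : qPoch a q (n + 1) = qPoch a q n * (1 - a * q ^ n) :=
  Finset.prod_range_succ _ _

theorem one_sub_ne_zero_of_norm_lt_one {z : ℂ} (hz : ‖z‖ < 1) : 1 - z ≠ 0 :=
  sub_ne_zero.2 fun h => by simp [← h] at hz

section

variable (q : ℂ)

theorem one_div_mul_sq_pow_succ (n : ℕ) : 1 / q * (q ^ 2) ^ (n + 1) = q ^ (2 * n + 1) := by
  rcases eq_or_ne q 0 with rfl | hq
  · simp
  · field_simp
    ring

theorem qPoch_one_div_sq_succ_succ (n : ℕ) :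
    qPoch (1 / q) (q ^ 2) (n + 2) = qPoch (1 / q) (q ^ 2) (n + 1) * (1 - q ^ (2 * n + 1)) := by
  rw [qPoch_succ, one_div_mul_sq_pow_succ]

theorem qPoch_neg_sq_succ (n : ℕ) :
    qPoch (-q ^ 2) (q ^ 2) (n + 1) = qPoch (-q ^ 2) (q ^ 2) n * (1 + q ^ (2 * n + 2)) := by
  rw [qPoch_succ, ← pow_mul]
  ring

-- The paper's `α_{n+1}`.
noncomputable def telescopingTerm (n : ℕ) : ℂ :=
  qPoch (1 / q) (q ^ 2) (n + 1) * (-1) ^ (n + 1) * q ^ (2 * (n + 1)) /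
    ((1 - q) * qPoch (-q ^ 2) (q ^ 2) n)

theorem telescopingTerm_zero (hq : ‖q‖ < 1) : telescopingTerm q 0 = q := by
  have h1q : 1 - q ≠ 0 := one_sub_ne_zero_of_norm_lt_one hq
  have hq1 := one_div_mul_sq_pow_succ q 0
  simp only [telescopingTerm, qPoch, zero_add, Finset.prod_range_one, Finset.prod_range_zero,
    pow_zero, mul_one]
  field_simp
  linear_combination hq1

theorem telescopingTerm_succ (n : ℕ) :
    telescopingTerm q (n + 1) =
      telescopingTerm q n * (-q ^ 2 * (1 - q ^ (2 * n + 1)) / (1 + q ^ (2 * n + 2))) := by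
  simp only [telescopingTerm]
  rw [qPoch_one_div_sq_succ_succ, qPoch_neg_sq_succ, div_mul_div_comm]
  congr 1 <;> ring

theorem first_summand_eq (h : 1 - q ≠ 0) (n : ℕ) :
    qPoch (1 / q) (q ^ 2) (n + 1) * (-1 : ℂ) ^ (n + 1) * q ^ (2 * (n + 1)) /
        qPoch (-q ^ 2) (q ^ 2) (n + 1) =
      telescopingTerm q n * ((1 - q) / (1 + q ^ (2 * n + 2))) := by
  rw [telescopingTerm, qPoch_neg_sq_succ, div_mul_div_comm, ← mul_div_mul_right _ _ h]
  ring

theorem second_summand_eq (h : 1 - q ≠ 0) (n : ℕ) :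
    qPoch (1 / q) (q ^ 2) (n + 2) * (-1 : ℂ) ^ (n + 1) * q ^ (2 * (n + 1) + 1) /
        qPoch (-q ^ 2) (q ^ 2) (n + 1) =
      telescopingTerm q n * ((1 - q) / (1 + q ^ (2 * n + 2))) * (q * (1 - q ^ (2 * n + 1))) := by
  rw [← first_summand_eq q h, qPoch_one_div_sq_succ_succ]
  ring

theorem summand_eq_telescopingTerm_sub_succ (hq : ‖q‖ < 1) (n : ℕ) :
    (1 + q) / (1 - q) * (telescopingTerm q n * ((1 - q) / (1 + q ^ (2 * n + 2)))) -
        telescopingTerm q n * ((1 - q) / (1 + q ^ (2 * n + 2))) * (q * (1 - q ^ (2 * n + 1))) =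
      telescopingTerm q n - telescopingTerm q (n + 1) := by
  have h1 : 1 - q ≠ 0 := one_sub_ne_zero_of_norm_lt_one hq
  have h2 : 1 + q ^ (2 * n + 2) ≠ 0 := by
    simpa using one_sub_ne_zero_of_norm_lt_one (z := -q ^ (2 * n + 2)) (by
      rw [norm_neg, norm_pow]; exact pow_lt_one₀ (norm_nonneg _) hq (by omega))
  rw [telescopingTerm_succ]
  field_simp
  ring

theorem summable_telescopingTerm (hq : ‖q‖ < 1) : Summable (telescopingTerm q) := by
  refine summable_of_eq_mul_of_tendsto (telescopingTerm_succ q)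
    (l := -q ^ 2 * (1 - 0) / (1 + 0)) ?_ ?_
  · simpa using pow_lt_one₀ (norm_nonneg q) hq two_ne_zero
  · exact ((tendsto_pow_two_mul_add hq 1).const_sub 1 |>.const_mul _).div
      ((tendsto_pow_two_mul_add hq 2).const_add 1) (by norm_num)

end

theorem stmt_11_general (q : ℂ) (hq : ‖q‖ < 1) :
    ((1 + q) / (1 - q)) *
        ∑' n : ℕ, qPoch (1 / q) (q ^ 2) (n + 1) * (-1 : ℂ) ^ (n + 1) * q ^ (2 * (n + 1)) /
          qPoch (-q ^ 2) (q ^ 2) (n + 1)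
      - ∑' n : ℕ, qPoch (1 / q) (q ^ 2) (n + 2) * (-1 : ℂ) ^ (n + 1) * q ^ (2 * (n + 1) + 1) /
          qPoch (-q ^ 2) (q ^ 2) (n + 1)
      = q := by
  have h1 : 1 - q ≠ 0 := one_sub_ne_zero_of_norm_lt_one hq
  have hu : Tendsto (fun n : ℕ => (1 - q) / (1 + q ^ (2 * n + 2))) atTop
      (𝓝 ((1 - q) / (1 + 0))) :=
    tendsto_const_nhds.div ((tendsto_pow_two_mul_add hq 2).const_add 1) (by norm_num)
  have hv : Tendsto (fun n : ℕ => q * (1 - q ^ (2 * n + 1))) atTop (𝓝 (q * (1 - 0))) :=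
    ((tendsto_pow_two_mul_add hq 1).const_sub 1).const_mul q
  have hf := (summable_telescopingTerm q hq).mul_of_tendsto hu
  simp_rw [first_summand_eq q h1, second_summand_eq q h1]
  rw [← tsum_mul_left, ← (hf.mul_left _).tsum_sub (hf.mul_of_tendsto hv)]
  simp_rw [summand_eq_telescopingTerm_sub_succ q hq]
  rw [(summable_telescopingTerm q hq).tsum_sub_succ, telescopingTerm_zero q hq]

/-- For 0<|q|<1 with q≠1,
`((1+q)/(1-q)) ∑_{n≥1} (1/q;q²)_n (-1)^n q^{2n}/(-q²;q²)_n
  - ∑_{n≥1} (1/q;q²)_{n+1} (-1)^n q^{2n+1}/(-q²;q²)_n = q`. -/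
theorem stmt_11 (q : ℂ) (hq0 : q ≠ 0) (hq : ‖q‖ < 1) (hq1 : q ≠ 1) :
    ((1 + q) / (1 - q)) *
        ∑' n : ℕ, qPoch (1 / q) (q ^ 2) (n + 1) * (-1 : ℂ) ^ (n + 1) * q ^ (2 * (n + 1)) /
          qPoch (-q ^ 2) (q ^ 2) (n + 1)
      - ∑' n : ℕ, qPoch (1 / q) (q ^ 2) (n + 2) * (-1 : ℂ) ^ (n + 1) * q ^ (2 * (n + 1) + 1) /
          qPoch (-q ^ 2) (q ^ 2) (n + 1)
      = q :=
  stmt_11_general q hq
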